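/- arXiv:2109.15215 — 5 statements merged into one kernel-verified Lean document; each statement's English description precedes it below -/
import Mathlib

section
/- Let H be a graph and L a list assignment of H with |L(v)| ≥ deg(v) + 1 for every vertex v. If c is a proper L-colouring of H sampled uniformly at random, then for any fixed colour x, the probability that c(v) ≠ x for all vertices v of H is at least ∏_{v ∈ V(H)} (1 − 1/(|L(v)| − deg(v))). -/
/-!
Add the vertices to the constraint "`c v ≠ x`" one at a time. Among the proper colourings
that already avoid `x` on a set `S ∌ v`, every one with `c v = x` can be recoloured at `v` to
any of the at least `|L v| - deg v` colours of `L v` unused on the neighbours of `v`, and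
distinct such colourings give disjoint families. So at most a `1 / (|L v| - deg v)` fraction
of them has `c v = x`, and the product over all vertices bounds the surviving fraction.
-/

open Finset

namespace SimpleGraph

variable {V α : Type*} [Fintype V] [DecidableEq V] [DecidableEq α]
  (H : SimpleGraph V) [DecidableRel H.Adj] (L : V → Finset α) (x : α)

def avoidingColorings (S : Finset V) : Finset (V → α) :=
  (Fintype.piFinset L).filter fun c => (∀ u v, H.Adj u v → c u ≠ c v) ∧ ∀ w ∈ S, c w ≠ x

variable {H L x}

lemma update_mem_avoidingColorings {S : Finset V} {c : V → α} {v : V} {y : α}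
    (hc : c ∈ H.avoidingColorings L x S) (hv : v ∉ S)
    (hy : y ∈ L v \ (H.neighborFinset v).image c) :
    Function.update c v y ∈ H.avoidingColorings L x S := by
  simp only [avoidingColorings, mem_filter, Fintype.mem_piFinset, mem_sdiff, mem_image,
    mem_neighborFinset, not_exists, not_and] at hc hy ⊢
  obtain ⟨hcL, hproper, hS⟩ := hc
  refine ⟨fun w => ?_, fun a b hab => ?_, fun w hw => ?_⟩
  · rcases eq_or_ne w v with rfl | hwv
    · simpa using hy.1
    · simpa [hwv] using hcL w
  · rcases eq_or_ne a v with rfl | hav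
    · simpa [hab.ne'] using fun h => hy.2 b hab h.symm
    · rcases eq_or_ne b v with rfl | hbv
      · simpa [hav] using hy.2 a hab.symm
      · simpa [hav, hbv] using hproper a b hab
  · simpa [ne_of_mem_of_not_mem hw hv] using hS w hw

omit [DecidableEq V] in
lemma card_sub_degree_le_card_sdiff_image (c : V → α) (v : V) :
    #(L v) - H.degree v ≤ #(L v \ (H.neighborFinset v).image c) :=
  calc #(L v) - H.degree v ≤ #(L v) - #((H.neighborFinset v).image c) := by
        gcongr; exact card_image_le.trans (H.card_neighborFinset_eq_degree v).le
    _ ≤ _ := le_card_sdiff _ _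

lemma card_sub_degree_le_card_recolorings {S : Finset V} {c : V → α} {v : V}
    (hc : c ∈ H.avoidingColorings L x S) (hv : v ∉ S) (hcv : c v = x) :
    #(L v) - H.degree v ≤
      #((H.avoidingColorings L x S).filter fun d => c = Function.update d v x) := by
  refine (card_sub_degree_le_card_sdiff_image c v).trans
    (card_le_card_of_injOn (Function.update c v) (fun y hy => ?_) ?_)
  · simp only [coe_filter, Set.mem_ofPred_eq, Function.update_idem]
    exact ⟨update_mem_avoidingColorings hc hv hy, by rw [← hcv, Function.update_eq_self]⟩
  · intro y _ z _ h
    simpa using congrFun h v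

/-- Double counting the pairs `(c, d)` with `c = update d v x`: each `c` with `c v = x` has at
least `|L v| - deg v` partners `d`, and each `d` has exactly one partner `c`. -/
lemma card_filter_apply_eq_mul_card_sub_degree_le {S : Finset V} {v : V} (hv : v ∉ S) :
    #((H.avoidingColorings L x S).filter fun c => c v = x) * (#(L v) - H.degree v) ≤
      #(H.avoidingColorings L x S) := by
  rw [← mul_one #(H.avoidingColorings L x S)]
  refine card_mul_le_card_mul (fun c d => c = Function.update d v x) (fun c hc => ?_)
    (fun d _ => card_le_one.2 fun c₁ hc₁ c₂ hc₂ => ?_)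
  · rw [mem_filter] at hc
    exact card_sub_degree_le_card_recolorings hc.1 hv hc.2
  · simp only [bipartiteBelow, mem_filter] at hc₁ hc₂
    rw [hc₁.2, hc₂.2]

lemma avoidingColorings_insert (S : Finset V) (v : V) :
    H.avoidingColorings L x (insert v S) =
      (H.avoidingColorings L x S).filter fun c => c v ≠ x := by
  ext c
  simp only [avoidingColorings, mem_filter, forall_mem_insert]
  tauto

lemma one_sub_one_div_mul_card_le_card_insert {S : Finset V} {v : V} (hv : v ∉ S)
    (hdeg : H.degree v < #(L v)) :
    (1 - 1 / ((#(L v) : ℝ) - H.degree v)) * #(H.avoidingColorings L x S) ≤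
      #(H.avoidingColorings L x (insert v S)) := by
  set A := H.avoidingColorings L x S
  set B := A.filter fun c => c v = x
  have hk : (0 : ℝ) < #(L v) - H.degree v := sub_pos.2 (by exact_mod_cast hdeg)
  have hB : (#B : ℝ) ≤ #A / (#(L v) - H.degree v) := by
    rw [le_div_iff₀ hk]
    have := card_filter_apply_eq_mul_card_sub_degree_le (H := H) (L := L) (x := x) hv
    rw [← Nat.cast_le (α := ℝ), Nat.cast_mul, Nat.cast_sub hdeg.le] at this
    exact this
  have hsplit : (#(H.avoidingColorings L x (insert v S)) : ℝ) = #A - #B := by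
    rw [avoidingColorings_insert, eq_sub_iff_add_eq, ← Nat.cast_add, add_comm,
      card_filter_add_card_filter_not]
  calc (1 - 1 / ((#(L v) : ℝ) - H.degree v)) * #A
      = #A - #A / (#(L v) - H.degree v) := by ring
    _ ≤ #A - #B := by linarith
    _ = _ := hsplit.symm

lemma prod_mul_card_le_card_avoidingColorings (hL : ∀ v, H.degree v < #(L v))
    (S : Finset V) :
    (∏ v ∈ S, (1 - 1 / ((#(L v) : ℝ) - H.degree v))) * #(H.avoidingColorings L x ∅) ≤
      #(H.avoidingColorings L x S) := by
  induction S using Finset.induction with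
  | empty => simp
  | insert v S hv ih =>
    rw [prod_insert hv, mul_assoc]
    have hfactor : 0 ≤ 1 - 1 / ((#(L v) : ℝ) - H.degree v) := by
      rw [sub_nonneg, div_le_one (sub_pos.2 (by exact_mod_cast hL v))]
      have : (H.degree v : ℝ) + 1 ≤ #(L v) := by exact_mod_cast hL v
      linarith
    exact (mul_le_mul_of_nonneg_left ih hfactor).trans
      (one_sub_one_div_mul_card_le_card_insert hv (hL v))

end SimpleGraph

/-- For a uniformly random proper `L`-colouring of `H` (formalised as a ratio of
counts), the probability that a fixed colour `x` is avoided everywhere is at least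
`∏_v (1 - 1/(|L v| - deg v))`. -/
theorem avoid_color_probability {V : Type*} [Fintype V] [DecidableEq V]
    (H : SimpleGraph V) [DecidableRel H.Adj] (L : V → Finset ℕ)
    (hL : ∀ v, H.degree v + 1 ≤ (L v).card) (x : ℕ) :
    (((Fintype.piFinset L).filter
        (fun c => ∀ u v, H.Adj u v → c u ≠ c v)).filter (fun c => ∀ v, c v ≠ x)).card ≥
      (∏ v : V, (1 - 1 / (((L v).card : ℝ) - H.degree v))) *
        ((Fintype.piFinset L).filter (fun c => ∀ u v, H.Adj u v → c u ≠ c v)).card := by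
  have h := SimpleGraph.prod_mul_card_le_card_avoidingColorings (x := x) hL univ
  simp only [SimpleGraph.avoidingColorings, notMem_empty, mem_univ, forall_const, IsEmpty.forall_iff,
    implies_true, and_true] at h
  rwa [ge_iff_le, filter_filter]
end

section
/- Let H be a graph with list assignment L, and let v, u be distinct vertices of H. Suppose that for every induced subgraph H' of H and every vertex w ∈ V(H'), the number of proper L-colourings of H' is at least ℓ times the number of proper L-colourings of H' − w, for some ℓ > 0. Then for a uniformly random proper L-colouring c of H − v and any threshold t ≥ 0, the probability that ℓ_c(u) ≤ t is at most t/ℓ. -/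
open Finset

def properColorings {V : Type*} [Fintype V] [DecidableEq V]
    (G : SimpleGraph V) [DecidableRel G.Adj] (L : V → Finset ℕ) (s : Finset V) :
    Finset (V → ℕ) :=
  (Fintype.piFinset (fun v => if v ∈ s then L v else {0})).filter
    (fun c => ∀ u ∈ s, ∀ w ∈ s, G.Adj u w → c u ≠ c w)

lemma mem_pc {V : Type*} [Fintype V] [DecidableEq V]
    (G : SimpleGraph V) [DecidableRel G.Adj] (L : V → Finset ℕ) (s : Finset V)
    (c : V → ℕ) : c ∈ properColorings G L s ↔
      (∀ w, c w ∈ (if w ∈ s then L w else ({0} : Finset ℕ))) ∧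
      ∀ a ∈ s, ∀ b ∈ s, G.Adj a b → c a ≠ c b := by
  simp [properColorings, Fintype.mem_piFinset]

/-- Markov-type bound: if every induced subgraph has at least `ℓ` times as many
proper colourings as the subgraph minus any one vertex, then for a uniformly
random proper colouring `c` of `H − v`, the probability that `ℓ_c(u) ≤ t` is at
most `t/ℓ`. -/
theorem few_available_colors_unlikely {V : Type*} [Fintype V] [DecidableEq V]
    (H : SimpleGraph V) [DecidableRel H.Adj] (L : V → Finset ℕ)
    (v u : V) (huv : u ≠ v) (ℓ : ℝ) (hℓ : 0 < ℓ)
    (hind : ∀ s : Finset V, ∀ w ∈ s,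
      ((properColorings H L s).card : ℝ) ≥ ℓ * (properColorings H L (s.erase w)).card)
    (hne : (properColorings H L (Finset.univ.erase v)).Nonempty)
    (t : ℝ) (ht : 0 ≤ t) :
    (((properColorings H L (Finset.univ.erase v)).filter
          (fun c => ((L u \ ((H.neighborFinset u).erase v).image c).card : ℝ) ≤ t)).card : ℝ) /
        (properColorings H L (Finset.univ.erase v)).card ≤ t / ℓ := by
  classical
  set S : Finset V := Finset.univ.erase v with hS
  set A := properColorings H L S with hA
  set B := properColorings H L (S.erase u) with hB
  set F := A.filter
    (fun c => ((L u \ ((H.neighborFinset u).erase v).image c).card : ℝ) ≤ t) with hF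
  set r : (V → ℕ) → (V → ℕ) := fun c => Function.update c u 0 with hr
  have huS : u ∈ S := Finset.mem_erase.2 ⟨huv, Finset.mem_univ u⟩
  -- r agrees with c off u
  have hrne : ∀ c : V → ℕ, ∀ w, w ≠ u → r c w = c w := by
    intro c w hw; simp [hr, Function.update_of_ne hw]
  -- image equality
  have himg : ∀ c : V → ℕ,
      ((H.neighborFinset u).erase v).image (r c) = ((H.neighborFinset u).erase v).image c := by
    intro c
    apply Finset.image_congr
    intro w hw
    apply hrne
    rintro rfl
    have hw' : w ∈ (H.neighborFinset w).erase v := by exact_mod_cast hw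
    exact H.irrefl ((H.mem_neighborFinset w w).1 (Finset.mem_erase.1 hw').2)
  -- r maps F into B.filter Q
  set Q : (V → ℕ) → Prop := fun c => ((L u \ ((H.neighborFinset u).erase v).image c).card : ℝ) ≤ t
    with hQ
  have hmap : ∀ c ∈ F, r c ∈ B.filter Q := by
    intro c hc
    obtain ⟨hcA, hcP⟩ := Finset.mem_filter.1 hc
    obtain ⟨hc1, hc2⟩ := (mem_pc H L S c).1 hcA
    refine Finset.mem_filter.2 ⟨(mem_pc H L (S.erase u) (r c)).2 ⟨?_, ?_⟩, ?_⟩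
    · intro w
      by_cases hw : w = u
      · subst hw; simp [hr, Finset.mem_erase]
      · rw [hrne c w hw]
        rcases eq_or_ne w v with rfl | hwv
        · simpa [hS, Finset.mem_erase] using hc1 w
        · simpa [hS, Finset.mem_erase, hw, hwv] using hc1 w
    · intro a ha b hb hab
      rw [hrne c a (Finset.mem_erase.1 ha).1, hrne c b (Finset.mem_erase.1 hb).1]
      exact hc2 a (Finset.mem_erase.1 ha).2 b (Finset.mem_erase.1 hb).2 hab
    · show Q (r c)
      simpa [hQ, himg c] using hcP
  -- fiberwise count
  have hcount := Finset.card_eq_sum_card_fiberwise hmap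
  -- each fiber has card ≤ t
  have hfib : ∀ c' ∈ B.filter Q, ((F.filter fun c => r c = c').card : ℝ) ≤ t := by
    intro c' hc'
    have hQc' : Q c' := (Finset.mem_filter.1 hc').2
    have hinj : ((F.filter fun c => r c = c').card : ℝ) ≤
        ((L u \ ((H.neighborFinset u).erase v).image c').card : ℝ) := by
      have := Finset.card_le_card_of_injOn (f := fun c => c u)
        (s := F.filter fun c => r c = c')
        (t := L u \ ((H.neighborFinset u).erase v).image c') ?_ ?_
      · exact_mod_cast this
      · intro c hc
        obtain ⟨hcF, hcr⟩ := Finset.mem_filter.1 hc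
        obtain ⟨hcA, _⟩ := Finset.mem_filter.1 hcF
        obtain ⟨hc1, hc2⟩ := (mem_pc H L S c).1 hcA
        refine Finset.mem_sdiff.2 ⟨?_, ?_⟩
        · have := hc1 u; simpa [huS] using this
        · intro hmem
          obtain ⟨w, hw, hwc⟩ := Finset.mem_image.1 hmem
          obtain ⟨hwv, hwn⟩ := Finset.mem_erase.1 hw
          have hadj : H.Adj u w := by simpa [SimpleGraph.mem_neighborFinset] using hwn
          have hwu : w ≠ u := fun h => H.irrefl (h ▸ hadj)
          have hcw : c' w = c w := by rw [← hcr]; exact hrne c w hwu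
          exact hc2 u huS w (Finset.mem_erase.2 ⟨hwv, Finset.mem_univ w⟩) hadj
            (hwc.symm.trans hcw)
      · intro c1 h1 c2 h2 hval
        have hr1 : r c1 = c' := (Finset.mem_filter.1 h1).2
        have hr2 : r c2 = c' := (Finset.mem_filter.1 h2).2
        funext w
        by_cases hw : w = u
        · subst hw; exact hval
        · have := congrFun (hr1.trans hr2.symm) w
          rwa [hrne c1 w hw, hrne c2 w hw] at this
    exact hinj.trans hQc'
  have hFle : (F.card : ℝ) ≤ t * B.card := by
    rw [hcount]
    push_cast
    calc (∑ c' ∈ B.filter Q, ((F.filter fun c => r c = c').card : ℝ))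
        ≤ ∑ c' ∈ B.filter Q, t := Finset.sum_le_sum hfib
      _ = t * (B.filter Q).card := by rw [Finset.sum_const, nsmul_eq_mul, mul_comm]
      _ ≤ t * B.card := by
          apply mul_le_mul_of_nonneg_left _ ht
          exact_mod_cast Finset.card_le_card (Finset.filter_subset _ _)
  have hAB : (A.card : ℝ) ≥ ℓ * B.card := hind S u huS
  have hApos : (0:ℝ) < A.card := by exact_mod_cast Finset.card_pos.2 hne
  rw [div_le_div_iff₀ hApos hℓ]
  have hBnn : (0:ℝ) ≤ (B.card : ℝ) := Nat.cast_nonneg _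
  nlinarith [hFle, hAB]
end

section
/- The Lambert W function satisfies W(z) = ln z − ln ln z + o(1) as z → ∞. -/
/-!
Taking logarithms in `W e^W = z` gives `log z = W + log W`. Hence `W ≥ (log z)/2 → ∞`, and
`log log z = log W + log (1 + log W / W)`, so that
`W - (log z - log log z) = log (1 + log W / W)`, which tends to `0` because `log W / W → 0`.
-/

open Filter Real

theorem pos_of_mul_exp_eq {w z : ℝ} (hz : 0 < z) (h : w * exp w = z) : 0 < w :=
  pos_of_mul_pos_left (h ▸ hz) (exp_pos w).le

theorem log_eq_add_log_of_mul_exp_eq {w z : ℝ} (hw : 0 < w) (h : w * exp w = z) :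
    log z = w + log w := by
  rw [← h, log_mul hw.ne' (exp_ne_zero w), log_exp, add_comm]

theorem log_le_two_mul_of_log_eq_add_log {w z : ℝ} (hw : 0 < w) (h : log z = w + log w) :
    log z ≤ 2 * w := by
  linarith [log_le_sub_one_of_pos hw]

theorem sub_sub_log_eq_log_one_add_log_div {w l : ℝ} (hw : 0 < w) (hl : l ≠ 0)
    (h : l = w + log w) : w - (l - log l) = log (1 + log w / w) := by
  have hfactor : l = w * (1 + log w / w) := by
    rw [mul_add, mul_div_cancel₀ _ hw.ne', h, mul_one]
  have hfactor_ne : 1 + log w / w ≠ 0 := right_ne_zero_of_mul (hfactor ▸ hl)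
  rw [hfactor, log_mul hw.ne' hfactor_ne, ← hfactor, h]
  ring

theorem tendsto_log_one_add_log_div_self_atTop :
    Tendsto (fun x : ℝ => log (1 + log x / x)) atTop (nhds 0) := by
  have hcont : ContinuousAt (fun t : ℝ => log (1 + t)) 0 :=
    (continuous_const.add continuous_id).continuousAt.log (by norm_num)
  simpa [Function.comp_def] using hcont.tendsto.comp isLittleO_log_id_atTop.tendsto_div_nhds_zero

/-- `W(z) = ln z − ln ln z + o(1)` as `z → ∞`, for the principal branch of the
Lambert `W` function. -/
theorem lambertW_asymptotic (W : ℝ → ℝ)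
    (hW : ∀ z : ℝ, 0 < z → W z * Real.exp (W z) = z) :
    Tendsto (fun z : ℝ => W z - (Real.log z - Real.log (Real.log z))) atTop (nhds 0) := by
  have hpos : ∀ᶠ z in atTop, 0 < W z :=
    (eventually_gt_atTop 0).mono fun z hz => pos_of_mul_exp_eq hz (hW z hz)
  have hlog : ∀ᶠ z in atTop, log z = W z + log (W z) := by
    filter_upwards [eventually_gt_atTop 0, hpos] with z hz hw
    exact log_eq_add_log_of_mul_exp_eq hw (hW z hz)
  have hWtop : Tendsto W atTop atTop := by
    refine tendsto_atTop_mono' atTop ?_ (tendsto_log_atTop.atTop_div_const two_pos)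
    filter_upwards [hpos, hlog] with z hw hz
    linarith [log_le_two_mul_of_log_eq_add_log hw hz]
  refine (tendsto_log_one_add_log_div_self_atTop.comp hWtop).congr' ?_
  filter_upwards [hpos, hlog, eventually_gt_atTop 1] with z hw hz hz1
  exact (sub_sub_log_eq_log_one_add_log_div hw (log_pos hz1).ne' hz).symm
end

section
/- For every graph G of maximum degree Δ, there exists a Δ-regular graph H containing G as an induced subgraph, together with a map φ : V(H) → V(G), such that for every vertex v of H, the number of edges in H[N(v)] equals the number of edges in G[N(φ(v))]. -/
/-!
Take two disjoint copies of `G` and join the two copies of every vertex of degree less than `Δ`.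
This raises every deficient degree by one and leaves the others alone. An added edge joins the
two copies of a single vertex, so it never lies inside a neighbourhood: the neighbourhood of
`(v, i)` spans a copy of `G[N(v)]`, and the projection to the first coordinate preserves local
edge counts. After `Δ` rounds the graph is `Δ`-regular.
-/

namespace SimpleGraph

universe u

variable {V : Type*}

/-- Ordered pairs of adjacent neighbours of `v`: twice the number of edges of `G[N(v)]`. -/
def neighborAdjPairs (G : SimpleGraph V) (v : V) : Set (V × V) :=
  {p | G.Adj p.1 p.2 ∧ p.1 ∈ G.neighborSet v ∧ p.2 ∈ G.neighborSet v}

namespace Iso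

variable {W : Type*} {G : SimpleGraph V} {G' : SimpleGraph W} (e : G ≃g G') (v : V)

theorem preimage_neighborAdjPairs :
    Prod.map e e ⁻¹' G'.neighborAdjPairs (e v) = G.neighborAdjPairs v := by
  ext
  simp [neighborAdjPairs, e.map_adj_iff]

theorem ncard_neighborAdjPairs :
    (G'.neighborAdjPairs (e v)).ncard = (G.neighborAdjPairs v).ncard := by
  rw [← e.preimage_neighborAdjPairs, Set.ncard_preimage_of_injective_subset_range
    (e.injective.prodMap e.injective) (by simp [(e.surjective.prodMap e.surjective).range_eq])]

theorem ncard_neighborSet : (G'.neighborSet (e v)).ncard = (G.neighborSet v).ncard := by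
  rw [← e.image_neighborSet, Set.ncard_image_of_injective _ e.injective]

end Iso

def doubleJoin (G : SimpleGraph V) (S : Set V) : SimpleGraph (V × Bool) where
  Adj p q := (p.2 = q.2 ∧ G.Adj p.1 q.1) ∨ (p.1 = q.1 ∧ p.2 ≠ q.2 ∧ p.1 ∈ S)
  symm := ⟨by
    rintro ⟨a, i⟩ ⟨b, j⟩ (⟨hij, hab⟩ | ⟨rfl, hij, ha⟩)
    exacts [.inl ⟨hij.symm, hab.symm⟩, .inr ⟨rfl, Ne.symm hij, ha⟩]⟩
  loopless := ⟨by
    rintro ⟨a, i⟩ (⟨-, h⟩ | ⟨-, h, -⟩)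
    exacts [G.loopless.irrefl a h, h rfl]⟩

variable {G : SimpleGraph V} {S : Set V}

@[simp]
theorem doubleJoin_adj {p q : V × Bool} :
    (G.doubleJoin S).Adj p q ↔
      (p.2 = q.2 ∧ G.Adj p.1 q.1) ∨ (p.1 = q.1 ∧ p.2 ≠ q.2 ∧ p.1 ∈ S) :=
  Iff.rfl

def embeddingDoubleJoin (G : SimpleGraph V) (S : Set V) : G ↪g G.doubleJoin S where
  toFun v := (v, false)
  inj' _ _ h := congrArg Prod.fst h
  map_rel_iff' := ⟨fun h ↦ (h.resolve_right fun h ↦ h.2.1 rfl).2, (.inl ⟨rfl, ·⟩)⟩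

theorem neighborSet_doubleJoin (v : V) (i : Bool) :
    (G.doubleJoin S).neighborSet (v, i) =
      (·, i) '' G.neighborSet v ∪ {p | p = (v, !i) ∧ v ∈ S} := by
  ext ⟨w, j⟩
  cases i <;> cases j <;> simp [eq_comm]

theorem ncard_neighborSet_doubleJoin [Finite V] [DecidablePred (· ∈ S)] (v : V) (i : Bool) :
    ((G.doubleJoin S).neighborSet (v, i)).ncard =
      (G.neighborSet v).ncard + if v ∈ S then 1 else 0 := by
  rw [neighborSet_doubleJoin, Set.ncard_union_eq,
    Set.ncard_image_of_injective _ (Prod.mk_left_injective i)]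
  · split_ifs with h <;> simp [h]
  · rw [Set.disjoint_right]
    rintro _ ⟨rfl, -⟩ ⟨w, -, h⟩
    cases i <;> simp at h

theorem neighborAdjPairs_doubleJoin (v : V) (i : Bool) :
    (G.doubleJoin S).neighborAdjPairs (v, i) =
      Prod.map (·, i) (·, i) '' G.neighborAdjPairs v := by
  -- The only neighbour of `(v, i)` outside copy `i` is `(v, !i)`, which is adjacent to no other
  -- neighbour of `(v, i)`.
  ext ⟨⟨a, j⟩, ⟨b, k⟩⟩
  cases i <;> cases j <;> cases k <;> simp [neighborAdjPairs]
    <;> aesop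

theorem ncard_neighborAdjPairs_doubleJoin (p : V × Bool) :
    ((G.doubleJoin S).neighborAdjPairs p).ncard = (G.neighborAdjPairs p.1).ncard := by
  rw [neighborAdjPairs_doubleJoin,
    Set.ncard_image_of_injective _ ((Prod.mk_left_injective _).prodMap (Prod.mk_left_injective _))]

theorem exists_regular_embedding_of_le_degree_add {W : Type u} [Finite W] (G : SimpleGraph W)
    (Δ k : ℕ) (hle : ∀ v, (G.neighborSet v).ncard ≤ Δ)
    (hge : ∀ v, Δ ≤ (G.neighborSet v).ncard + k) :
    ∃ (U : Type u) (_ : Finite U) (H : SimpleGraph U) (φ : U → W),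
      (∀ u, (H.neighborSet u).ncard = Δ) ∧ Nonempty (G ↪g H) ∧
      ∀ u, (H.neighborAdjPairs u).ncard = (G.neighborAdjPairs (φ u)).ncard := by
  induction k generalizing W with
  | zero =>
    exact ⟨W, ‹_›, G, id, fun v ↦ (hle v).antisymm (hge v), ⟨.refl⟩, fun _ ↦ rfl⟩
  | succ k ih =>
    classical
    let S := {v | (G.neighborSet v).ncard < Δ}
    have hdeg (p : W × Bool) : ((G.doubleJoin S).neighborSet p).ncard =
        (G.neighborSet p.1).ncard + if p.1 ∈ S then 1 else 0 :=
      ncard_neighborSet_doubleJoin p.1 p.2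
    have hle' (p : W × Bool) : ((G.doubleJoin S).neighborSet p).ncard ≤ Δ := by
      have := hle p.1
      simp only [hdeg, S, Set.mem_ofPred_eq]
      split_ifs <;> omega
    have hge' (p : W × Bool) : Δ ≤ ((G.doubleJoin S).neighborSet p).ncard + k := by
      have := hge p.1
      simp only [hdeg, S, Set.mem_ofPred_eq]
      split_ifs <;> omega
    obtain ⟨U, _, H, φ, hreg, ⟨f⟩, hpairs⟩ := ih (G.doubleJoin S) hle' hge'
    refine ⟨U, ‹_›, H, Prod.fst ∘ φ, hreg, ⟨f.comp (G.embeddingDoubleJoin S)⟩,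
      fun u ↦ ?_⟩
    rw [hpairs, Function.comp_apply, ncard_neighborAdjPairs_doubleJoin]

end SimpleGraph

open SimpleGraph

/-- Every graph `G` of maximum degree `Δ` embeds as an induced subgraph into a
`Δ`-regular graph `H`, with a map `φ : V(H) → V(G)` such that every
neighbourhood of `H` spans exactly as many edges as the corresponding
neighbourhood of `G` (counted here as ordered adjacent pairs). -/
theorem embed_into_regular {V : Type*} [Fintype V] (G : SimpleGraph V)
    (Δ : ℕ) (hΔ : ∀ v, (G.neighborSet v).ncard ≤ Δ) :
    ∃ (U : Type) (_ : Fintype U) (H : SimpleGraph U) (φ : U → V),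
      (∀ u : U, (H.neighborSet u).ncard = Δ) ∧
      (∃ _ : G ↪g H, True) ∧
      (∀ u : U,
        {p : U × U | H.Adj p.1 p.2 ∧ p.1 ∈ H.neighborSet u ∧ p.2 ∈ H.neighborSet u}.ncard =
        {p : V × V | G.Adj p.1 p.2 ∧ p.1 ∈ G.neighborSet (φ u) ∧
          p.2 ∈ G.neighborSet (φ u)}.ncard) := by
  obtain ⟨U, _, H, φ, hreg, ⟨f⟩, hpairs⟩ :=
    G.exists_regular_embedding_of_le_degree_add Δ Δ hΔ fun v ↦ Nat.le_add_left Δ _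
  -- `U` may live in a higher universe; move `H` to `Fin n` along an equivalence.
  let e : Fin (Nat.card U) ≃ U := (Finite.equivFin U).symm
  let iso : H.comap e ≃g H := Iso.comap e H
  refine ⟨Fin (Nat.card U), inferInstance, H.comap e, φ ∘ e, fun a ↦ ?_,
    ⟨iso.symm.toEmbedding.comp f, trivial⟩, fun a ↦ ?_⟩
  · exact (iso.ncard_neighborSet a).symm.trans (hreg _)
  · exact (iso.ncard_neighborAdjPairs a).symm.trans (hpairs _)
end

section
/- Let G be a graph with list assignment L and positive reals q(v) for each vertex v. Suppose v₁,…,vₙ is an ordering of V(G) with q(v₁) ≤ ⋯ ≤ q(vₙ), and let H_i be the subgraph induced by {v₁,…,v_{i−1}}. If for each i the number of proper L-colourings of H_{i+1} is at least q(v_i)·exp(−C·deg_{H_i}(v_i)/q(v_i)) times that of H_i for a constant C ≥ 1, then the number of proper L-colourings of G is at least qⁿ · exp(−C·Σ_{i=1}^n deg_G(v_i)/(2 q(v_i))), where q is the geometric mean of the q(v_i). -/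
open Finset

/-- Telescoping lower bound on the number of colourings: if along an ordering
`v₁,…,vₙ` of the vertices with non-decreasing weights `q(v₁) ≤ ⋯ ≤ q(vₙ)`, each
step gains a factor `q(vᵢ)·exp(−C·deg_{Hᵢ}(vᵢ)/q(vᵢ))`, then the total number of
proper `L`-colourings is at least `qⁿ·exp(−C·Σᵢ deg_G(vᵢ)/(2q(vᵢ)))`, where
`qⁿ = ∏ᵢ q(vᵢ)`. Here `Hᵢ` is induced by `{v₁,…,v_{i−1}}`. -/
theorem telescoping_coloring_count {V : Type*} [Fintype V] [DecidableEq V]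
    (G : SimpleGraph V) [DecidableRel G.Adj] (L : V → Finset ℕ)
    (n : ℕ) (hn : Fintype.card V = n) (e : Fin n ≃ V)
    (q : V → ℝ) (hqpos : ∀ v, 0 < q v)
    (hmono : ∀ i j : Fin n, i ≤ j → q (e i) ≤ q (e j))
    (C : ℝ) (hC : 1 ≤ C)
    (s : ℕ → Finset V) (hs : ∀ k, s k = Finset.univ.filter (fun w => (e.symm w : ℕ) < k))
    (hstep : ∀ i : Fin n,
      q (e i) * Real.exp (-C * ((G.neighborFinset (e i) ∩ s i).card : ℝ) / q (e i)) *
          ((properColorings G L (s i)).card : ℝ) ≤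
        ((properColorings G L (s (i + 1))).card : ℝ)) :
    (∏ v : V, q v) * Real.exp (-C * ∑ v : V, (G.degree v : ℝ) / (2 * q v)) ≤
      ((properColorings G L Finset.univ).card : ℝ) := by
  classical
  set D : Fin n → ℝ := fun i => ((G.neighborFinset (e i) ∩ s i).card : ℝ) with hD
  -- base case
  have hbase : ((properColorings G L (s 0)).card : ℝ) = 1 := by
    have h0 : s 0 = ∅ := by rw [hs]; ext w; simp
    rw [h0]
    unfold properColorings
    rw [Finset.filter_true_of_mem (by simp)]
    simp [Fintype.card_piFinset]
  -- induction
  have key : ∀ k, k ≤ n →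
      (∏ i ∈ Finset.univ.filter (fun i : Fin n => (i : ℕ) < k),
        (q (e i) * Real.exp (-C * D i / q (e i)))) ≤
      ((properColorings G L (s k)).card : ℝ) := by
    intro k
    induction k with
    | zero =>
      intro _
      rw [hbase]
      have : Finset.univ.filter (fun i : Fin n => (i : ℕ) < 0) = ∅ := by
        ext i; simp
      rw [this, Finset.prod_empty]
    | succ k ih =>
      intro hk
      have hkn : k < n := hk
      set i : Fin n := ⟨k, hkn⟩ with hi
      have hfilt : Finset.univ.filter (fun j : Fin n => (j : ℕ) < k + 1) =
          insert i (Finset.univ.filter (fun j : Fin n => (j : ℕ) < k)) := by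
        ext j
        simp only [Finset.mem_insert, Finset.mem_filter, Finset.mem_univ, true_and,
          Nat.lt_succ_iff_lt_or_eq]
        constructor
        · rintro (h | h)
          · exact Or.inr h
          · exact Or.inl (Fin.ext h)
        · rintro (h | h)
          · exact Or.inr (by rw [h])
          · exact Or.inl h
      have hnotmem : i ∉ Finset.univ.filter (fun j : Fin n => (j : ℕ) < k) := by
        simp [hi]
      rw [hfilt, Finset.prod_insert hnotmem]
      have hpos : 0 < q (e i) * Real.exp (-C * D i / q (e i)) :=
        mul_pos (hqpos _) (Real.exp_pos _)
      calc q (e i) * Real.exp (-C * D i / q (e i)) *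
            ∏ j ∈ Finset.univ.filter (fun j : Fin n => (j : ℕ) < k),
              (q (e j) * Real.exp (-C * D j / q (e j)))
          ≤ q (e i) * Real.exp (-C * D i / q (e i)) *
            ((properColorings G L (s k)).card : ℝ) := by
            exact mul_le_mul_of_nonneg_left (ih (le_of_lt hkn)) hpos.le
        _ ≤ ((properColorings G L (s (k + 1))).card : ℝ) := by
            have := hstep i
            simpa [hi, hD] using this
  have hkey := key n le_rfl
  have hsn : s n = Finset.univ := by
    rw [hs]; ext w; simp [(e.symm w).isLt]
  have hfiltn : Finset.univ.filter (fun i : Fin n => (i : ℕ) < n) = Finset.univ := by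
    ext i; simp [i.isLt]
  rw [hsn, hfiltn] at hkey
  rw [Finset.prod_mul_distrib, ← Real.exp_sum] at hkey
  -- combinatorial inequality
  have hcomb : ∑ i : Fin n, D i / q (e i) ≤ ∑ v : V, (G.degree v : ℝ) / (2 * q v) := by
    have hDsum : ∀ i : Fin n, D i / q (e i) = ∑ j : Fin n,
        (if (j : ℕ) < (i : ℕ) ∧ G.Adj (e i) (e j) then 1 / q (e i) else 0) := by
      intro i
      have h1 : D i = ∑ v : V, (if v ∈ G.neighborFinset (e i) ∩ s ↑i then (1:ℝ) else 0) := by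
        rw [hD, Finset.sum_ite_mem, Finset.univ_inter, Finset.sum_const, nsmul_eq_mul, mul_one]
      rw [h1, ← Equiv.sum_comp e
        (fun v => if v ∈ G.neighborFinset (e i) ∩ s ↑i then (1:ℝ) else 0), Finset.sum_div]
      refine Finset.sum_congr rfl fun j _ => ?_
      simp only [Finset.mem_inter, SimpleGraph.mem_neighborFinset, hs, Finset.mem_filter,
        Finset.mem_univ, true_and, Equiv.symm_apply_apply]
      by_cases h : (j : ℕ) < (i : ℕ) ∧ G.Adj (e i) (e j)
      · rw [if_pos ⟨h.2, h.1⟩, if_pos h]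
      · rw [if_neg (fun hc => h ⟨hc.2, hc.1⟩), if_neg h, zero_div]
    have hdeg : ∑ v : V, (G.degree v : ℝ) / (2 * q v) = ∑ i : Fin n, ∑ j : Fin n,
        (if G.Adj (e i) (e j) then 1 / (2 * q (e i)) else 0) := by
      rw [← Equiv.sum_comp e (fun v => (G.degree v : ℝ) / (2 * q v))]
      refine Finset.sum_congr rfl fun i _ => ?_
      have h1 : (G.degree (e i) : ℝ)
          = ∑ v : V, (if v ∈ G.neighborFinset (e i) then (1:ℝ) else 0) := by
        rw [SimpleGraph.degree, Finset.sum_ite_mem, Finset.univ_inter, Finset.sum_const,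
          nsmul_eq_mul, mul_one]
      rw [h1, ← Equiv.sum_comp e
        (fun v => if v ∈ G.neighborFinset (e i) then (1:ℝ) else 0), Finset.sum_div]
      refine Finset.sum_congr rfl fun j _ => ?_
      simp only [SimpleGraph.mem_neighborFinset]
      by_cases h : G.Adj (e i) (e j)
      · rw [if_pos h, if_pos h]
      · rw [if_neg h, if_neg h, zero_div]
    have hsplit : ∀ i j : Fin n, (if G.Adj (e i) (e j) then 1 / (2 * q (e i)) else 0) =
        (if (j : ℕ) < (i : ℕ) ∧ G.Adj (e i) (e j) then 1 / (2 * q (e i)) else 0)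
      + (if (i : ℕ) < (j : ℕ) ∧ G.Adj (e i) (e j) then 1 / (2 * q (e i)) else 0) := by
      intro i j
      by_cases h : G.Adj (e i) (e j)
      · have hne : (i : ℕ) ≠ (j : ℕ) := by
          intro hc
          exact G.ne_of_adj h (by rw [Fin.ext hc])
        rcases lt_or_gt_of_ne hne with hlt | hgt
        · rw [if_pos h, if_neg (fun hc => absurd hc.1 (by omega)), if_pos ⟨hlt, h⟩, zero_add]
        · rw [if_pos h, if_pos ⟨hgt, h⟩, if_neg (fun hc => absurd hc.1 (by omega)), add_zero]
      · simp [h]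
    have hswap : ∑ i : Fin n, ∑ j : Fin n,
          (if (i : ℕ) < (j : ℕ) ∧ G.Adj (e i) (e j) then 1 / (2 * q (e i)) else 0)
        = ∑ i : Fin n, ∑ j : Fin n,
          (if (j : ℕ) < (i : ℕ) ∧ G.Adj (e i) (e j) then 1 / (2 * q (e j)) else 0) := by
      rw [Finset.sum_comm]
      refine Finset.sum_congr rfl fun a _ => Finset.sum_congr rfl fun b _ => ?_
      have hadj : G.Adj (e b) (e a) ↔ G.Adj (e a) (e b) := G.adj_comm _ _
      simp only [hadj]
    calc ∑ i : Fin n, D i / q (e i)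
        = ∑ i : Fin n, ∑ j : Fin n,
            (if (j : ℕ) < (i : ℕ) ∧ G.Adj (e i) (e j) then 1 / q (e i) else 0) :=
          Finset.sum_congr rfl fun i _ => hDsum i
      _ ≤ ∑ i : Fin n, ∑ j : Fin n,
            ((if (j : ℕ) < (i : ℕ) ∧ G.Adj (e i) (e j) then 1 / (2 * q (e i)) else 0)
            + (if (j : ℕ) < (i : ℕ) ∧ G.Adj (e i) (e j) then 1 / (2 * q (e j)) else 0)) := by
          refine Finset.sum_le_sum fun i _ => Finset.sum_le_sum fun j _ => ?_
          by_cases h : (j : ℕ) < (i : ℕ) ∧ G.Adj (e i) (e j)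
          · rw [if_pos h, if_pos h, if_pos h]
            have hji : (j : Fin n) ≤ i := by
              rw [Fin.le_def]; exact le_of_lt h.1
            have hq : q (e j) ≤ q (e i) := hmono j i hji
            have hqi := hqpos (e i)
            have hqj := hqpos (e j)
            have h2 : 1 / (2 * q (e i)) ≤ 1 / (2 * q (e j)) :=
              one_div_le_one_div_of_le (by linarith) (by linarith)
            have h3 : 1 / q (e i) = 1 / (2 * q (e i)) + 1 / (2 * q (e i)) := by
              field_simp
              norm_num
            linarith
          · rw [if_neg h, if_neg h, if_neg h]; simp
      _ = (∑ i : Fin n, ∑ j : Fin n,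
            (if (j : ℕ) < (i : ℕ) ∧ G.Adj (e i) (e j) then 1 / (2 * q (e i)) else 0))
          + ∑ i : Fin n, ∑ j : Fin n,
            (if (j : ℕ) < (i : ℕ) ∧ G.Adj (e i) (e j) then 1 / (2 * q (e j)) else 0) := by
          rw [← Finset.sum_add_distrib]
          exact Finset.sum_congr rfl fun i _ => Finset.sum_add_distrib
      _ = ∑ i : Fin n, ∑ j : Fin n,
            (if G.Adj (e i) (e j) then 1 / (2 * q (e i)) else 0) := by
          rw [← hswap, ← Finset.sum_add_distrib]
          refine Finset.sum_congr rfl fun i _ => ?_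
          rw [← Finset.sum_add_distrib]
          exact Finset.sum_congr rfl fun j _ => (hsplit i j).symm
      _ = ∑ v : V, (G.degree v : ℝ) / (2 * q v) := hdeg.symm
  -- finish
  have hprod : ∏ i : Fin n, q (e i) = ∏ v : V, q v := Equiv.prod_comp e q
  have hexp : Real.exp (-C * ∑ v : V, (G.degree v : ℝ) / (2 * q v)) ≤
      Real.exp (∑ x : Fin n, -C * D x / q (e x)) := by
    rw [Real.exp_le_exp]
    have harg : ∑ x : Fin n, -C * D x / q (e x) = -C * ∑ x : Fin n, D x / q (e x) := by
      rw [Finset.mul_sum]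
      exact Finset.sum_congr rfl fun x _ => by ring
    rw [harg]
    have hC0 : (0:ℝ) ≤ C := le_trans zero_le_one hC
    nlinarith [mul_nonneg hC0 (sub_nonneg.mpr hcomb)]
  refine le_trans ?_ hkey
  rw [← hprod]
  exact mul_le_mul_of_nonneg_left hexp (Finset.prod_nonneg fun i _ => (hqpos _).le)
end
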